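/- Let L ≥ 2, N = 2^L, and let Z be the DFT matrix, the DCT-II matrix, or the DST-II matrix of size N. Let (C_1, …, C_N) be any N-tuple of complex N×N matrices, each of rank at most one, such that each C_i has at most N/2 nonzero rows and at most 2 nonzero columns, and C_1 + … + C_N = Z. Then the supports supp(C_1), …, supp(C_N) are pairwise disjoint. -/
import Mathlib


open scoped Classical

/-- The DFT matrix of size `N`: entry `ω_N^{(k−1)(l−1)}` with `ω_N = exp(−2πi/N)`,
at 1-based row `k` and column `l` (0-based indices here). -/
noncomputable def dftM (N : ℕ) : Matrix (Fin N) (Fin N) ℂ :=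
  Matrix.of fun k l =>
    Complex.exp (-(2 * (Real.pi : ℂ) * Complex.I) / N) ^ ((k : ℕ) * (l : ℕ))

/-- The DCT-II matrix of size `N` (with complex entries): entry
`cos((π/N)(l − 1/2)(k − 1))` at 1-based row `k` and column `l`. -/
noncomputable def dctM (N : ℕ) : Matrix (Fin N) (Fin N) ℂ :=
  Matrix.of fun k l =>
    ((Real.cos (Real.pi / N * (((l : ℕ) : ℝ) + 1 / 2) * ((k : ℕ) : ℝ)) : ℝ) : ℂ)

/-- The DST-II matrix of size `N` (with complex entries): entry
`sin((π/N)(l − 1/2) k)` at 1-based row `k` and column `l`. -/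
noncomputable def dstM (N : ℕ) : Matrix (Fin N) (Fin N) ℂ :=
  Matrix.of fun k l =>
    ((Real.sin (Real.pi / N * (((l : ℕ) : ℝ) + 1 / 2) * (((k : ℕ) : ℝ) + 1)) : ℝ) : ℂ)


lemma dctM_entry_ne (L N : ℕ) (hN : N = 2 ^ L) (k l : ℕ) (hk : k < N) :
    Real.cos (Real.pi / N * ((l : ℝ) + 1 / 2) * (k : ℝ)) ≠ 0 := by
  intro h
  rw [Real.cos_eq_zero_iff] at h
  obtain ⟨n, hn⟩ := h
  have hNpos : 0 < N := by subst hN; positivity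
  have hN0 : (N : ℝ) ≠ 0 := Nat.cast_ne_zero.mpr hNpos.ne'
  have hπ : (Real.pi : ℝ) ≠ 0 := Real.pi_ne_zero
  have key : ((2 * l + 1) * k : ℝ) = ((2 * n + 1) * N : ℝ) := by
    field_simp at hn
    nlinarith [Real.pi_pos, hn]
  have key2 : ((2 * l + 1) * k : ℤ) = (2 * n + 1) * N := by exact_mod_cast key
  have hn0 : 0 ≤ n := by nlinarith [key2, Int.natCast_pos.mpr hNpos]
  obtain ⟨m, rfl⟩ : ∃ m : ℕ, n = (m : ℤ) := ⟨n.toNat, (Int.toNat_of_nonneg hn0).symm⟩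
  have key3 : (2 * l + 1) * k = (2 * m + 1) * N := by exact_mod_cast key2
  have hdvd : 2 ^ L ∣ (2 * l + 1) * k := hN ▸ key3 ▸ Dvd.intro_left _ rfl
  have hcop : Nat.Coprime (2 ^ L) (2 * l + 1) :=
    Nat.Coprime.pow_left _ (Nat.coprime_two_left.mpr ⟨l, by ring⟩)
  have hk0 : 2 ^ L ∣ k := hcop.dvd_of_dvd_mul_left hdvd
  have : k = 0 := Nat.eq_zero_of_dvd_of_lt hk0 (hN ▸ hk)
  subst this
  have : 0 < (2 * m + 1) * N := Nat.mul_pos (by omega) hNpos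
  omega


lemma dstM_entry_ne (L N : ℕ) (hN : N = 2 ^ L) (k l : ℕ) (hk : k < N) :
    Real.sin (Real.pi / N * ((l : ℝ) + 1 / 2) * ((k : ℝ) + 1)) ≠ 0 := by
  intro h
  rw [Real.sin_eq_zero_iff] at h
  obtain ⟨n, hn⟩ := h
  have hNpos : 0 < N := by subst hN; positivity
  have hN0 : (N : ℝ) ≠ 0 := Nat.cast_ne_zero.mpr hNpos.ne'
  have hπ : (Real.pi : ℝ) ≠ 0 := Real.pi_ne_zero
  have key : ((2 * l + 1) * (k + 1) : ℝ) = ((2 * n) * N : ℝ) := by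
    field_simp at hn
    nlinarith [Real.pi_pos, hn]
  have key2 : ((2 * l + 1) * (k + 1) : ℤ) = (2 * n) * N := by exact_mod_cast key
  have hn0 : 0 ≤ n := by nlinarith [key2, Int.natCast_pos.mpr hNpos]
  obtain ⟨m, rfl⟩ : ∃ m : ℕ, n = (m : ℤ) := ⟨n.toNat, (Int.toNat_of_nonneg hn0).symm⟩
  have key3 : (2 * l + 1) * (k + 1) = m * 2 ^ (L + 1) := by
    have : (2 * l + 1) * (k + 1) = 2 * m * N := by exact_mod_cast key2
    rw [this, hN]; ring
  have hdvd : 2 ^ (L + 1) ∣ (2 * l + 1) * (k + 1) := key3 ▸ Dvd.intro_left _ rfl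
  have hcop : Nat.Coprime (2 ^ (L + 1)) (2 * l + 1) :=
    Nat.Coprime.pow_left _ (Nat.coprime_two_left.mpr ⟨l, by ring⟩)
  have hk0 : 2 ^ (L + 1) ∣ k + 1 := hcop.dvd_of_dvd_mul_left hdvd
  have hlt : k + 1 < 2 ^ (L + 1) := by
    have : k + 1 ≤ 2 ^ L := by omega
    have h2 : 2 ^ L < 2 ^ (L + 1) := by
      have := Nat.pow_lt_pow_right (a := 2) (by norm_num) (Nat.lt_succ_self L)
      omega
    omega
  have := Nat.eq_zero_of_dvd_of_lt hk0 hlt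
  omega

/-- Let `L ≥ 2`, `N = 2^L`, and let `Z` be the DFT, DCT-II or DST-II
matrix of size `N`.  If `(C₁, …, C_N)` are complex `N × N` matrices of rank at most one,
each with at most `N/2` nonzero rows and at most `2` nonzero columns, summing to `Z`,
then the supports of the `Cᵢ` are pairwise disjoint. -/
theorem supports_pairwise_disjoint_of_sum_eq (L : ℕ) (hL : 2 ≤ L) (N : ℕ) (hN : N = 2 ^ L)
    (Z : Matrix (Fin N) (Fin N) ℂ) (hZ : Z = dftM N ∨ Z = dctM N ∨ Z = dstM N)
    (C : Fin N → Matrix (Fin N) (Fin N) ℂ)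
    (hrank : ∀ i, (C i).rank ≤ 1)
    (hrows : ∀ i, (Finset.univ.filter fun k : Fin N => ∃ l, C i k l ≠ 0).card ≤ N / 2)
    (hcols : ∀ i, (Finset.univ.filter fun l : Fin N => ∃ k, C i k l ≠ 0).card ≤ 2)
    (hsum : ∑ i, C i = Z) :
    ∀ i j, i ≠ j →
      Disjoint {p : Fin N × Fin N | C i p.1 p.2 ≠ 0} {p : Fin N × Fin N | C j p.1 p.2 ≠ 0} := by
  intro i j hij
  -- every entry of Z is nonzero
  have hZne : ∀ k l : Fin N, Z k l ≠ 0 := by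
    rcases hZ with h | h | h <;> subst h <;> intro k l
    · exact pow_ne_zero _ (Complex.exp_ne_zero _)
    · intro h
      simp only [dctM, Matrix.of_apply, Complex.ofReal_eq_zero] at h
      exact dctM_entry_ne L N hN (k : ℕ) (l : ℕ) k.isLt h
    · intro h
      simp only [dstM, Matrix.of_apply, Complex.ofReal_eq_zero] at h
      exact dstM_entry_ne L N hN (k : ℕ) (l : ℕ) k.isLt h
  classical
  set S : Fin N → Finset (Fin N × Fin N) :=
    fun t => Finset.univ.filter (fun p => C t p.1 p.2 ≠ 0) with hSdef
  have hScard : ∀ t, (S t).card ≤ N := by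
    intro t
    have hsub : S t ⊆ (Finset.univ.filter fun k : Fin N => ∃ l, C t k l ≠ 0) ×ˢ
        (Finset.univ.filter fun l : Fin N => ∃ k, C t k l ≠ 0) := by
      intro p hp
      simp only [hSdef, Finset.mem_filter, Finset.mem_univ, true_and] at hp
      simp only [Finset.mem_product, Finset.mem_filter, Finset.mem_univ, true_and]
      exact ⟨⟨p.2, hp⟩, ⟨p.1, hp⟩⟩
    have hNeven : N / 2 * 2 ≤ N := Nat.div_mul_le_self N 2
    calc (S t).card ≤ _ := Finset.card_le_card hsub
      _ = _ * _ := Finset.card_product _ _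
      _ ≤ (N / 2) * 2 := Nat.mul_le_mul (hrows t) (hcols t)
      _ ≤ N := hNeven
  set f : Fin N × Fin N → ℕ :=
    fun p => (Finset.univ.filter fun t => p ∈ S t).card with hfdef
  have hcover : ∀ p, 1 ≤ f p := by
    intro p
    have hex : ∃ t, C t p.1 p.2 ≠ 0 := by
      by_contra h
      push_neg at h
      have : Z p.1 p.2 = 0 := by
        rw [← hsum]; simp [Matrix.sum_apply, h]
      exact hZne p.1 p.2 this
    obtain ⟨t, ht⟩ := hex
    refine Finset.card_pos.mpr ⟨t, ?_⟩
    simp [hSdef, ht]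
  have hsumf : ∑ p : Fin N × Fin N, f p = ∑ t : Fin N, (S t).card := by
    simp only [hfdef, Finset.card_filter]
    rw [Finset.sum_comm]
    congr 1
    ext t
    rw [← Finset.card_filter]
    congr 1
    simp
  have htotal : ∑ p : Fin N × Fin N, f p ≤ ∑ _p : Fin N × Fin N, 1 := by
    rw [hsumf]
    calc ∑ t, (S t).card ≤ ∑ _t : Fin N, N := Finset.sum_le_sum fun t _ => hScard t
      _ = N * N := by simp [mul_comm]
      _ = ∑ _p : Fin N × Fin N, 1 := by simp [Finset.card_univ]
  have hone : ∀ p, f p ≤ 1 := by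
    intro p
    by_contra h
    push_neg at h
    have hlt : ∑ _q : Fin N × Fin N, 1 < ∑ q : Fin N × Fin N, f q :=
      Finset.sum_lt_sum (fun q _ => hcover q) ⟨p, Finset.mem_univ p, h⟩
    omega
  rw [Set.disjoint_left]
  intro p hpi hpj
  have hset : ({i, j} : Finset (Fin N)) ⊆ Finset.univ.filter (fun t => p ∈ S t) := by
    intro t ht
    simp only [Finset.mem_insert, Finset.mem_singleton] at ht
    simp only [Finset.mem_filter, Finset.mem_univ, true_and]
    rcases ht with rfl | rfl
    · simp only [hSdef, Finset.mem_filter, Finset.mem_univ, true_and]; exact hpi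
    · simp only [hSdef, Finset.mem_filter, Finset.mem_univ, true_and]; exact hpj
  have h2 : 2 ≤ f p := by
    calc 2 = ({i, j} : Finset (Fin N)).card := (Finset.card_pair hij).symm
      _ ≤ f p := Finset.card_le_card hset
  have := hone p
  omega
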